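/- If two statements s₁ and s₂ each only read and write variables in disjoint footprints (s₁ depends only on and modifies only variables in A, s₂ only variables in B, with A ∩ B = ∅), then s₁ and s₂ commute from every state. -/
import Mathlib
theorem stmt_8 {Var Val : Type} (s₁ s₂ : (Var → Val) → (Var → Val))
    (A B : Set Var) (hdisj : A ∩ B = ∅)
    (h₁frame : ∀ σ v, v ∉ A → s₁ σ v = σ v)
    (h₁dep : ∀ σ σ', (∀ v ∈ A, σ v = σ' v) → ∀ v ∈ A, s₁ σ v = s₁ σ' v)
    (h₂frame : ∀ σ v, v ∉ B → s₂ σ v = σ v)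
    (h₂dep : ∀ σ σ', (∀ v ∈ B, σ v = σ' v) → ∀ v ∈ B, s₂ σ v = s₂ σ' v) :
    ∀ σ, s₂ (s₁ σ) = s₁ (s₂ σ) := by
  have hAB : ∀ v, v ∈ A → v ∉ B := fun v hA hB =>
    Set.eq_empty_iff_forall_notMem.mp hdisj v ⟨hA, hB⟩
  intro σ
  funext v
  by_cases hA : v ∈ A
  · have hB := hAB v hA
    rw [h₂frame _ v hB]
    exact (h₁dep σ (s₂ σ) (fun w hw => (h₂frame σ w (hAB w hw)).symm) v hA).symm ▸
      (h₁dep σ (s₂ σ) (fun w hw => (h₂frame σ w (hAB w hw)).symm) v hA)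
  · by_cases hB : v ∈ B
    · rw [h₁frame _ v hA]
      exact h₂dep (s₁ σ) σ (fun w hw => h₁frame σ w (fun hwA => hAB w hwA hw)) v hB
    · rw [h₂frame _ v hB, h₁frame _ v hA, h₁frame _ v hA, h₂frame _ v hB]
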